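/- For every t > 0 there exists a set A that is measurable with respect to the σ-algebra generated by the pair (ζ_t, Z) such that P((A \ {τ ≤ t}) ∪ ({τ ≤ t} \ A)) = 0; consequently, for every t > 0 the event {τ ≤ t} belongs to σ(ζ_s : s ≤ t) ∨ σ(Z) ∨ 𝓝_P, i.e. τ is a stopping time of the completed filtration generated by ζ and Z. -/

import Mathlib

open MeasureTheory ProbabilityTheory Real Set

noncomputable section

namespace LevyBridge

open Filter
open scoped NNReal

variable {Ω : Type*} [MeasurableSpace Ω]

/-! ### Given definitions (verbatim) -/

/-- The Gaussian (heat-kernel) density with variance `s`. -/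
def gaussDensity (s x : ℝ) : ℝ :=
  (Real.sqrt (2 * Real.pi * s))⁻¹ * Real.exp (-x ^ 2 / (2 * s))

/-- `B` is a standard Brownian motion under `P`: it starts at `0`, has a.s. continuous
paths, independent increments, and Gaussian increments `B t - B s ∼ N(0, t - s)`. -/
def IsBrownianMotion (P : Measure Ω) (B : ℝ → Ω → ℝ) : Prop :=
  (∀ᵐ ω ∂P, B 0 ω = 0) ∧
  (∀ᵐ ω ∂P, Continuous fun t => B t ω) ∧
  (∀ (n : ℕ) (t : Fin (n + 1) → ℝ), Monotone t →
    iIndepFun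
      (fun i : Fin n => fun ω => B (t i.succ) ω - B (t i.castSucc) ω) P) ∧
  (∀ s t : ℝ, 0 ≤ s → s ≤ t →
    Measure.map (fun ω => B t ω - B s ω) P = gaussianReal 0 (Real.toNNReal (t - s)))

/-- Mutual independence of the Brownian motion `B`, the random time `τ` and the
pinning point `Z`:  `B ⫫ (τ, Z)` and `τ ⫫ Z`. -/
def MutuallyIndep (P : Measure Ω) (B : ℝ → Ω → ℝ) (τ Z : Ω → ℝ) : Prop :=
  IndepFun (fun ω t => B t ω) (fun ω => (τ ω, Z ω)) P ∧ IndepFun τ Z P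

/-- The Brownian bridge with random length `τ` and random pinning point `Z`:
`ζ_t = B_{t∧τ} − ((t∧τ)/τ) B_τ + ((t∧τ)/τ) Z`. -/
def bridge (B : ℝ → Ω → ℝ) (τ Z : Ω → ℝ) (t : ℝ) (ω : Ω) : ℝ :=
  B (min t (τ ω)) ω - (min t (τ ω) / τ ω) * B (τ ω) ω + (min t (τ ω) / τ ω) * Z ω

/-! ### Auxiliary material -/

/-- dyadic approximation from above -/
def dy (n : ℕ) (s : ℝ) : ℝ := (⌈s * 2 ^ n⌉ : ℤ) / 2 ^ n

lemma le_dy (n : ℕ) (s : ℝ) : s ≤ dy n s := by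
  rw [dy, le_div_iff₀ (by positivity)]
  exact Int.le_ceil _

lemma dy_le (n : ℕ) (s : ℝ) : dy n s ≤ s + (1 / 2) ^ n := by
  rw [dy, div_le_iff₀ (by positivity)]
  have this : ((⌈s * 2 ^ n⌉ : ℤ) : ℝ) ≤ s * 2 ^ n + 1 := (Int.ceil_lt_add_one (s * 2 ^ n)).le
  calc ((⌈s * 2 ^ n⌉ : ℤ) : ℝ) ≤ s * 2 ^ n + 1 := this
    _ = (s + (1 / 2) ^ n) * 2 ^ n := by rw [add_mul, ← mul_pow]; norm_num

lemma tendsto_dy (s : ℝ) : Tendsto (fun n => dy n s) atTop (nhds s) := by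
  have h1 : Tendsto (fun n : ℕ => s + (1 / 2 : ℝ) ^ n) atTop (nhds s) := by
    have := tendsto_pow_atTop_nhds_zero_of_lt_one (by norm_num : (0:ℝ) ≤ 1/2) (by norm_num)
    simpa using (tendsto_const_nhds (x := s)).add this
  exact tendsto_of_tendsto_of_tendsto_of_le_of_le tendsto_const_nhds h1
    (fun n => le_dy n s) (fun n => dy_le n s)

lemma measurable_dy (n : ℕ) : Measurable (dy n) :=
  (((measurable_of_countable (fun k : ℤ => (k : ℝ))).comp
    (measurable_id.mul_const _).ceil)).div_const _

lemma countable_range_dy (n : ℕ) : (Set.range (dy n)).Countable := by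
  have h : Set.range (dy n) ⊆ Set.range (fun k : ℤ => (k : ℝ) / 2 ^ n) := by
    rintro x ⟨s, rfl⟩; exact ⟨⌈s * 2 ^ n⌉, rfl⟩
  exact (Set.countable_range _).mono h

lemma measurable_eval_comp {α : Type*} [MeasurableSpace α] {v : α → ℝ}
    (hv : Measurable v) (hc : (Set.range v).Countable) :
    Measurable fun p : (ℝ → ℝ) × α => p.1 (v p.2) := by
  intro S hS
  have heq : (fun p : (ℝ → ℝ) × α => p.1 (v p.2)) ⁻¹' S =
      ⋃ d ∈ Set.range v, ({p : (ℝ → ℝ) × α | p.1 d ∈ S} ∩ {p | v p.2 = d}) := by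
    ext ⟨f, a⟩
    simp only [Set.mem_preimage, Set.mem_iUnion, Set.mem_inter_iff, Set.mem_setOf_eq]
    constructor
    · intro h; exact ⟨v a, ⟨a, rfl⟩, h, rfl⟩
    · rintro ⟨d, _, h, hd⟩; rwa [hd]
  rw [heq]
  refine MeasurableSet.biUnion hc fun d _ => MeasurableSet.inter ?_ ?_
  · exact ((measurable_pi_apply d).comp measurable_fst) hS
  · exact (hv.comp measurable_snd) (measurableSet_singleton d)

lemma gaussianReal_singleton' {v : ℝ≥0} (hv : v ≠ 0) (m x : ℝ) :
    gaussianReal m v {x} = 0 :=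
  gaussianReal_absolutelyContinuous m hv (measure_singleton x)

/-! ### Main auxiliary lemmas -/

lemma null_linear_comb (P : Measure Ω) [IsProbabilityMeasure P]
    (B : ℝ → Ω → ℝ) (hB : IsBrownianMotion P B) (hBmeas : ∀ u, Measurable (B u))
    {a b c t s : ℝ} (hb : b ≠ 0) (h0 : 0 ≤ t) (hts : t < s) :
    P {ω | a * B t ω + b * B s ω = c} = 0 := by
  set U : Ω → ℝ := B t with hU
  set V : Ω → ℝ := fun ω => B s ω - B t ω with hV
  have hmono : Monotone (![0, t, s] : Fin 3 → ℝ) := by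
    intro i j hij
    fin_cases i <;> fin_cases j <;>
      simp_all [Fin.le_def] <;> linarith
  have h01 : IndepFun (fun ω => B t ω - B 0 ω) V P := by
    have h := (hB.2.2.1 2 ![0, t, s] hmono).indepFun (i := 0) (j := 1) (by decide)
    simpa [hV] using h
  have hUV : IndepFun U V P :=
    h01.congr (by filter_upwards [hB.1] with ω h; simp [hU, h]) EventuallyEq.rfl
  have hVlaw : P.map V = gaussianReal 0 (s - t).toNNReal := hB.2.2.2 t s h0 hts.le
  have hVmeas : Measurable V := (hBmeas s).sub (hBmeas t)
  have hUmeas : Measurable U := hBmeas t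
  haveI : IsProbabilityMeasure (P.map U) := Measure.isProbabilityMeasure_map hUmeas.aemeasurable
  haveI : IsProbabilityMeasure (P.map V) := Measure.isProbabilityMeasure_map hVmeas.aemeasurable
  have hmap : P.map (fun ω => (U ω, V ω)) = (P.map U).prod (P.map V) :=
    (indepFun_iff_map_prod_eq_prod_map_map hUmeas.aemeasurable hVmeas.aemeasurable).mp hUV
  have hset : {ω | a * B t ω + b * B s ω = c}
      = (fun ω => (U ω, V ω)) ⁻¹' {p : ℝ × ℝ | (a + b) * p.1 + b * p.2 = c} := by
    ext ω
    simp only [Set.mem_setOf_eq, Set.mem_preimage, hU, hV]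
    constructor <;> intro h <;> linarith
  have hD : MeasurableSet {p : ℝ × ℝ | (a + b) * p.1 + b * p.2 = c} := by
    have hm : Measurable fun p : ℝ × ℝ => (a + b) * p.1 + b * p.2 :=
      (measurable_fst.const_mul _).add (measurable_snd.const_mul _)
    exact hm (measurableSet_singleton c)
  rw [hset, ← Measure.map_apply (hUmeas.prodMk hVmeas) hD, hmap, Measure.prod_apply hD]
  have hz : ∀ x : ℝ, (P.map V) (Prod.mk x ⁻¹' {p : ℝ × ℝ | (a + b) * p.1 + b * p.2 = c}) = 0 := by
    intro x
    have hsec : Prod.mk x ⁻¹' {p : ℝ × ℝ | (a + b) * p.1 + b * p.2 = c}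
        = {(c - (a + b) * x) / b} := by
      ext y
      simp only [Set.mem_preimage, Set.mem_setOf_eq, Set.mem_singleton_iff]
      rw [eq_div_iff hb]
      constructor <;> intro h <;> linarith
    rw [hsec, hVlaw]
    exact gaussianReal_singleton'
      (by simp only [ne_eq, Real.toNNReal_eq_zero, not_le]; linarith) 0 _
  rw [lintegral_congr hz, lintegral_zero]

lemma key_null (P : Measure Ω) [IsProbabilityMeasure P]
    (B : ℝ → Ω → ℝ) (τ Z : Ω → ℝ)
    (hB : IsBrownianMotion P B)
    (hBmeas : ∀ s, Measurable (B s)) (hτ : Measurable τ) (hZ : Measurable Z)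
    (hτpos : ∀ ω, 0 < τ ω)
    (hindep : MutuallyIndep P B τ Z)
    (t : ℝ) (ht : 0 < t) :
    P {ω | t < τ ω ∧ bridge B τ Z t ω = Z ω} = 0 := by
  classical
  set g : (ℝ → ℝ) → ℝ → ℝ := fun f s => limsup (fun n => f (dy n s)) atTop with hg
  set φ : Ω → (ℝ → ℝ) := fun ω u => B u ω with hφ
  have hφmeas : Measurable φ := measurable_pi_lambda _ hBmeas
  set E : Set ((ℝ × ℝ) × (ℝ → ℝ)) :=
    {p | t < p.1.1 ∧ p.2 t - (t / p.1.1) * g p.2 p.1.1 + (t / p.1.1) * p.1.2 = p.1.2} with hE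
  have hgmeas : Measurable fun p : (ℝ × ℝ) × (ℝ → ℝ) => g p.2 p.1.1 := by
    apply Measurable.limsup
    intro n
    have h1 : Measurable fun p : (ℝ → ℝ) × (ℝ × ℝ) => p.1 (dy n p.2.1) :=
      measurable_eval_comp ((measurable_dy n).comp measurable_fst)
        ((countable_range_dy n).mono (Set.range_comp_subset_range _ _))
    exact h1.comp measurable_swap
  have hs1 : Measurable fun p : (ℝ × ℝ) × (ℝ → ℝ) => p.1.1 := measurable_fst.fst
  have hz1 : Measurable fun p : (ℝ × ℝ) × (ℝ → ℝ) => p.1.2 := measurable_fst.snd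
  have hft : Measurable fun p : (ℝ × ℝ) × (ℝ → ℝ) => p.2 t :=
    (measurable_pi_apply t).comp measurable_snd
  have hEmeas : MeasurableSet E := by
    have hLHS : Measurable fun p : (ℝ × ℝ) × (ℝ → ℝ) =>
        p.2 t - (t / p.1.1) * g p.2 p.1.1 + (t / p.1.1) * p.1.2 :=
      (hft.sub ((measurable_const.div hs1).mul hgmeas)).add
        ((measurable_const.div hs1).mul hz1)
    exact (measurableSet_lt measurable_const hs1).inter (measurableSet_eq_fun hLHS hz1)
  have haeq : {ω | t < τ ω ∧ bridge B τ Z t ω = Z ω}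
      =ᵐ[P] (fun ω => ((τ ω, Z ω), φ ω)) ⁻¹' E := by
    rw [Filter.eventuallyEq_set]
    filter_upwards [hB.2.1] with ω hcont
    have hg_eq : g (φ ω) (τ ω) = B (τ ω) ω := by
      have htend : Tendsto (fun n => φ ω (dy n (τ ω))) atTop (nhds (B (τ ω) ω)) :=
        (hcont.tendsto (τ ω)).comp (tendsto_dy (τ ω))
      exact htend.limsup_eq
    simp only [Set.mem_setOf_eq, Set.mem_preimage, hE]
    constructor
    · rintro ⟨hlt, hbr⟩
      refine ⟨hlt, ?_⟩
      rw [hg_eq]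
      rw [bridge, min_eq_left hlt.le] at hbr
      exact hbr
    · rintro ⟨hlt, heq⟩
      refine ⟨hlt, ?_⟩
      rw [bridge, min_eq_left hlt.le]
      rw [hg_eq] at heq
      exact heq
  have hpair : Measurable fun ω => ((τ ω, Z ω), φ ω) := (hτ.prodMk hZ).prodMk hφmeas
  have hindep' : IndepFun (fun ω => (τ ω, Z ω)) φ P := hindep.1.symm
  haveI : IsProbabilityMeasure (P.map fun ω => (τ ω, Z ω)) :=
    Measure.isProbabilityMeasure_map (hτ.prodMk hZ).aemeasurable
  haveI : IsProbabilityMeasure (P.map φ) := Measure.isProbabilityMeasure_map hφmeas.aemeasurable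
  have hmap : P.map (fun ω => ((τ ω, Z ω), φ ω))
      = (P.map fun ω => (τ ω, Z ω)).prod (P.map φ) :=
    (indepFun_iff_map_prod_eq_prod_map_map (hτ.prodMk hZ).aemeasurable
      hφmeas.aemeasurable).mp hindep'
  rw [measure_congr haeq, ← Measure.map_apply hpair hEmeas, hmap, Measure.prod_apply hEmeas]
  have hzero : ∀ sz : ℝ × ℝ, (P.map φ) (Prod.mk sz ⁻¹' E) = 0 := by
    rintro ⟨s, z⟩
    by_cases hts : t < s
    · have hsec_meas : MeasurableSet (Prod.mk (s, z) ⁻¹' E) := measurable_prodMk_left hEmeas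
      rw [Measure.map_apply hφmeas hsec_meas]
      have haeq2 : φ ⁻¹' (Prod.mk (s, z) ⁻¹' E)
          =ᵐ[P] {ω | 1 * B t ω + (-(t / s)) * B s ω = z - (t / s) * z} := by
        rw [Filter.eventuallyEq_set]
        filter_upwards [hB.2.1] with ω hcont
        have hg_eq : g (φ ω) s = B s ω := by
          have htend : Tendsto (fun n => φ ω (dy n s)) atTop (nhds (B s ω)) :=
            (hcont.tendsto s).comp (tendsto_dy s)
          exact htend.limsup_eq
        simp only [Set.mem_preimage, Set.mem_setOf_eq, hE, hg_eq, hts, true_and]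
        show B t ω - t / s * B s ω + t / s * z = z ↔ _
        constructor <;> intro h <;> linarith
      rw [measure_congr haeq2]
      exact null_linear_comb P B hB hBmeas
        (neg_ne_zero.mpr (div_ne_zero ht.ne' (lt_trans ht hts).ne')) ht.le hts
    · have hempty : Prod.mk (s, z) ⁻¹' E = ∅ := by
        ext f; simp [hE, hts]
      simp [hempty]
  rw [lintegral_congr hzero, lintegral_zero]

/-- for every `t > 0` there is a set `A`, measurable for the σ-algebra
generated by the pair `(ζ_t, Z)`, that coincides with `{τ ≤ t}` up to a `P`-null set;
consequently `{τ ≤ t}` coincides up to a `P`-null set with a set of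
`σ(ζ_s : s ≤ t) ⊔ σ(Z)`, i.e. `{τ ≤ t} ∈ σ(ζ_s : s ≤ t) ∨ σ(Z) ∨ 𝓝_P` and `τ` is a
stopping time of the completed filtration generated by `ζ` and `Z`. -/
theorem tau_le_mem_completed_pair_sigma (P : Measure Ω) [IsProbabilityMeasure P]
    (B : ℝ → Ω → ℝ) (τ Z : Ω → ℝ)
    (hB : IsBrownianMotion P B)
    (hBmeas : ∀ s, Measurable (B s)) (hτ : Measurable τ) (hZ : Measurable Z)
    (hτpos : ∀ ω, 0 < τ ω)
    (hindep : MutuallyIndep P B τ Z)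
    (t : ℝ) (ht : 0 < t) :
    (∃ A : Set Ω,
      MeasurableSet[MeasurableSpace.comap (fun ω => (bridge B τ Z t ω, Z ω))
        inferInstance] A ∧
      P ((A \ {ω | τ ω ≤ t}) ∪ ({ω | τ ω ≤ t} \ A)) = 0) ∧
    (∃ A : Set Ω,
      MeasurableSet[(⨆ s ∈ Set.Iic t,
          MeasurableSpace.comap (bridge B τ Z s) inferInstance) ⊔
        MeasurableSpace.comap Z inferInstance] A ∧
      P ((A \ {ω | τ ω ≤ t}) ∪ ({ω | τ ω ≤ t} \ A)) = 0) := by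
  set A : Set Ω := {ω | bridge B τ Z t ω = Z ω} with hA
  have hTsubA : {ω | τ ω ≤ t} ⊆ A := by
    intro ω hω
    have hmin : min t (τ ω) = τ ω := min_eq_right hω
    have : bridge B τ Z t ω = Z ω := by
      rw [bridge, hmin, div_self (hτpos ω).ne']
      ring
    exact this
  have hnull : P ((A \ {ω | τ ω ≤ t}) ∪ ({ω | τ ω ≤ t} \ A)) = 0 := by
    have h2 : {ω | τ ω ≤ t} \ A = ∅ := Set.diff_eq_empty.mpr hTsubA
    have h1 : A \ {ω | τ ω ≤ t} ⊆ {ω | t < τ ω ∧ bridge B τ Z t ω = Z ω} := by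
      rintro ω ⟨hωA, hωT⟩
      exact ⟨lt_of_not_ge hωT, hωA⟩
    rw [h2, Set.union_empty]
    exact measure_mono_null h1 (key_null P B τ Z hB hBmeas hτ hZ hτpos hindep t ht)
  constructor
  · refine ⟨A, ?_, hnull⟩
    exact ⟨{p : ℝ × ℝ | p.1 = p.2}, measurableSet_eq_fun measurable_fst measurable_snd, rfl⟩
  · refine ⟨A, ?_, hnull⟩
    set m : MeasurableSpace Ω := (⨆ s ∈ Set.Iic t,
        MeasurableSpace.comap (bridge B τ Z s) inferInstance) ⊔
      MeasurableSpace.comap Z inferInstance with hm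
    have h1 : Measurable[m] (bridge B τ Z t) := by
      rw [measurable_iff_comap_le]
      exact le_trans (le_biSup (fun s => MeasurableSpace.comap (bridge B τ Z s) inferInstance)
        (Set.mem_Iic.mpr le_rfl)) le_sup_left
    have h2 : Measurable[m] Z := by
      rw [measurable_iff_comap_le]
      exact le_sup_right
    exact measurableSet_eq_fun h1 h2

end LevyBridge
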